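/- arXiv:1707.01616 — 2 statements merged into one kernel-verified Lean document; each statement's English description precedes it below -/
import Mathlib

section
/- The number of Smirnov words of length n over an alphabet of N symbols with prescribed frequency vector ν = (ν_1, ..., ν_N) (where ν_1 + ... + ν_N = n) equals the coefficient of y_1^{ν_1} ⋯ y_N^{ν_N} in the power series expansion of F(y_1, ..., y_N) = 1/(1 - (y_1/(1+y_1) + ... + y_N/(1+y_N))). -/
/-!
Let `G` be the generating series of Smirnov words and `A a` that of Smirnov words not starting
with the letter `a`. A nonempty Smirnov word is a letter `a` followed by a Smirnov word not
starting with `a`, so `G = 1 + ∑ a, X a * A a`; sorting Smirnov words by whether they start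
with `a` gives `G = A a + X a * A a`. Eliminating `A a = (1 + X a)⁻¹ * G` leaves
`G * (1 - ∑ a, X a * (1 + X a)⁻¹) = 1`.
-/

open MvPowerSeries Finset

namespace MvPowerSeries

lemma coeff_X_mul {σ R : Type*} [CommSemiring R] (i : σ) (φ : MvPowerSeries σ R)
    (ν : σ →₀ ℕ) :
    coeff ν (X i * φ) =
      if Finsupp.single i 1 ≤ ν then coeff (ν - Finsupp.single i 1) φ else 0 := by
  rw [X_def, coeff_monomial_mul, one_mul]

lemma eq_inv_one_sub_sum_X_mul_inv {σ k : Type*} [Field k] (s : Finset σ)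
    {G : MvPowerSeries σ k} {A : σ → MvPowerSeries σ k}
    (hA : ∀ i ∈ s, (1 + X i) * A i = G) (hG : G = 1 + ∑ i ∈ s, X i * A i) :
    G = (1 - ∑ i ∈ s, X i * (1 + X i)⁻¹)⁻¹ := by
  have hXA : ∀ i ∈ s, X i * A i = X i * (1 + X i)⁻¹ * G := fun i hi => by
    rw [← hA i hi, mul_assoc, ← mul_assoc _ _ (A i), MvPowerSeries.inv_mul_cancel _ (by simp),
      one_mul]
  rw [MvPowerSeries.eq_inv_iff_mul_eq_one (by simp), mul_sub, mul_one, mul_sum]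
  nth_rewrite 1 [hG]
  rw [sum_congr rfl hXA]
  simp only [mul_comm G]
  ring

end MvPowerSeries

namespace Smirnov

variable {α : Type*} [DecidableEq α]

noncomputable def letterCounts (w : List α) : α →₀ ℕ := Multiset.toFinsupp w

@[simp]
lemma letterCounts_apply (w : List α) (a : α) : letterCounts w a = w.count a := by
  simp [letterCounts, Multiset.toFinsupp_apply]

@[simp]
lemma letterCounts_nil : letterCounts ([] : List α) = 0 := Multiset.toFinsupp_zero

@[simp]
lemma letterCounts_cons (a : α) (w : List α) :
    letterCounts (a :: w) = Finsupp.single a 1 + letterCounts w := by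
  rw [letterCounts, ← Multiset.cons_coe, ← Multiset.singleton_add, Multiset.toFinsupp_add,
    Multiset.toFinsupp_singleton]
  rfl

lemma length_eq_sum_letterCounts [Fintype α] (w : List α) :
    w.length = ∑ a, letterCounts w a := by
  rw [← Multiset.coe_card, ← Multiset.toFinsupp_sum_eq, Finsupp.sum_fintype _ _ fun _ => rfl]
  rfl

noncomputable def wordsWithCounts (ν : α →₀ ℕ) : Finset (List α) :=
  (Finsupp.toMultiset ν).lists.toFinset

@[simp]
lemma mem_wordsWithCounts {w : List α} {ν : α →₀ ℕ} :
    w ∈ wordsWithCounts ν ↔ letterCounts w = ν := by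
  rw [wordsWithCounts, Multiset.mem_toFinset, Multiset.mem_lists_iff, letterCounts,
    Multiset.toFinsupp_eq_iff, eq_comm]
  rfl

section WordSeries

variable {R : Type*} [CommSemiring R]

/-- The series `∑ w, f w * y ^ letterCounts w`. -/
noncomputable def wordSeries : (List α → R) →ₗ[R] MvPowerSeries α R where
  toFun f ν := ∑ w ∈ wordsWithCounts ν, f w
  map_add' f g := by ext ν; exact sum_add_distrib
  map_smul' c f := by ext ν; exact (mul_sum _ _ _).symm

lemma coeff_wordSeries (f : List α → R) (ν : α →₀ ℕ) :
    coeff ν (wordSeries f) = ∑ w ∈ wordsWithCounts ν, f w := rfl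

lemma wordSeries_ite_nil :
    wordSeries (fun w : List α => if w = [] then (1 : R) else 0) = 1 := by
  ext ν
  simp [coeff_wordSeries, coeff_one, eq_comm]

def consWeight (a : α) (f : List α → R) : List α → R
  | [] => 0
  | b :: w => if b = a then f w else 0

lemma wordSeries_consWeight (a : α) (f : List α → R) :
    wordSeries (consWeight a f) = X a * wordSeries f := by
  ext ν
  rw [coeff_X_mul, coeff_wordSeries]
  split_ifs with ha
  · rw [coeff_wordSeries]
    calc ∑ w ∈ wordsWithCounts ν, consWeight a f w
        = ∑ w ∈ (wordsWithCounts (ν - Finsupp.single a 1)).map ⟨(a :: ·), List.cons_injective⟩,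
            consWeight a f w := by
          refine (sum_subset ?_ ?_).symm
          · simp only [subset_iff, mem_map, mem_wordsWithCounts, Function.Embedding.coeFn_mk]
            rintro _ ⟨t, ht, rfl⟩
            rw [letterCounts_cons, ht, add_tsub_cancel_of_le ha]
          · rintro (_ | ⟨b, t⟩) hw ht
            · rfl
            · rw [consWeight]
              split_ifs with hb
              · subst hb
                rw [mem_wordsWithCounts, letterCounts_cons] at hw
                refine absurd (mem_map_of_mem _ ?_) ht
                rw [mem_wordsWithCounts, ← hw, add_tsub_cancel_left]
              · rfl
      _ = ∑ t ∈ wordsWithCounts (ν - Finsupp.single a 1), f t := by simp [consWeight]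
  · refine sum_eq_zero fun w hw => ?_
    match w, hw with
    | [], _ => rfl
    | b :: w, hw =>
      rw [consWeight, if_neg]
      rintro rfl
      rw [mem_wordsWithCounts, letterCounts_cons] at hw
      exact ha (hw ▸ le_self_add)

end WordSeries

section Indicators

variable {R : Type*} [CommSemiring R]

def smirnovIndicator (w : List α) : R := if w.IsChain (· ≠ ·) then 1 else 0

def smirnovIndicatorAvoiding (a : α) (w : List α) : R :=
  if w.IsChain (· ≠ ·) ∧ w.head? ≠ some a then 1 else 0

lemma smirnovIndicator_cons (a : α) (w : List α) :
    smirnovIndicator (a :: w) = (smirnovIndicatorAvoiding a w : R) := by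
  rcases w with _ | ⟨b, w⟩ <;>
    simp [smirnovIndicator, smirnovIndicatorAvoiding, eq_comm, and_comm]

lemma smirnovIndicatorAvoiding_cons_self (a : α) (w : List α) :
    smirnovIndicatorAvoiding a (a :: w) = (0 : R) := by
  simp [smirnovIndicatorAvoiding]

lemma smirnovIndicatorAvoiding_cons_of_ne {a b : α} (h : b ≠ a) (w : List α) :
    smirnovIndicatorAvoiding a (b :: w) = (smirnovIndicator (b :: w) : R) := by
  simp [smirnovIndicatorAvoiding, smirnovIndicator, h]

lemma smirnovIndicator_eq_avoiding_add_consWeight (a : α) :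
    (smirnovIndicator : List α → R) =
      smirnovIndicatorAvoiding a + consWeight a (smirnovIndicatorAvoiding a) := by
  funext w
  rcases w with _ | ⟨b, w⟩
  · simp [smirnovIndicator, smirnovIndicatorAvoiding, consWeight]
  · obtain rfl | hb := eq_or_ne b a
    · simp [smirnovIndicator_cons, smirnovIndicatorAvoiding_cons_self, consWeight]
    · simp [smirnovIndicatorAvoiding_cons_of_ne hb, consWeight, hb]

lemma smirnovIndicator_eq_ite_nil_add_sum [Fintype α] :
    (smirnovIndicator : List α → R) =
      (fun w => if w = [] then 1 else 0) + ∑ a, consWeight a (smirnovIndicatorAvoiding a) := by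
  funext w
  rcases w with _ | ⟨b, w⟩
  · simp [smirnovIndicator, consWeight]
  · simp [smirnovIndicator_cons, consWeight]

lemma coeff_wordSeries_smirnovIndicator (ν : α →₀ ℕ) :
    coeff ν (wordSeries (smirnovIndicator : List α → R)) =
      #{w ∈ wordsWithCounts ν | w.IsChain (· ≠ ·)} := by
  rw [coeff_wordSeries, ← sum_boole]
  rfl

end Indicators

variable [Fintype α] {k : Type*} [Field k]

theorem wordSeries_smirnovIndicator :
    wordSeries (smirnovIndicator : List α → k) = (1 - ∑ a, X a * (1 + X a)⁻¹)⁻¹ := by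
  refine eq_inv_one_sub_sum_X_mul_inv univ
    (A := fun a => wordSeries (smirnovIndicatorAvoiding a)) (fun a _ => ?_) ?_
  · rw [smirnovIndicator_eq_avoiding_add_consWeight a, map_add, wordSeries_consWeight, add_mul,
      one_mul]
  · rw [smirnovIndicator_eq_ite_nil_add_sum, map_add, wordSeries_ite_nil, map_sum]
    simp only [wordSeries_consWeight]

theorem natCard_eq_coeff_inv (ν : α →₀ ℕ) :
    (Nat.card {w : List α // w.IsChain (· ≠ ·) ∧ letterCounts w = ν} : k) =
      coeff ν (1 - ∑ a, X a * (1 + X a)⁻¹)⁻¹ := by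
  rw [← wordSeries_smirnovIndicator, coeff_wordSeries_smirnovIndicator, ← Nat.card_eq_finsetCard]
  congr 1
  exact Nat.card_congr <| Equiv.subtypeEquivRight fun w => by
    rw [mem_filter, mem_wordsWithCounts, and_comm]

end Smirnov

theorem smirnov_count_eq_coeff (N n : ℕ) (ν : Fin N →₀ ℕ)
    (hν : ∑ i, ν i = n) :
    (Nat.card {w : List (Fin N) // w.length = n ∧ w.Chain' (· ≠ ·) ∧
        ∀ i, w.count i = ν i} : ℝ) =
      MvPowerSeries.coeff ν
        ((1 - ∑ i : Fin N, X i * (1 + X i)⁻¹)⁻¹ : MvPowerSeries (Fin N) ℝ) := by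
  rw [← Smirnov.natCard_eq_coeff_inv]
  refine congrArg _ (Nat.card_congr (Equiv.subtypeEquivRight fun w => ?_))
  have hcounts : Smirnov.letterCounts w = ν ↔ ∀ i, w.count i = ν i := by
    simp [Finsupp.ext_iff]
  constructor
  · rintro ⟨-, hchain, hw⟩
    exact ⟨hchain, hcounts.2 hw⟩
  · rintro ⟨hchain, hw⟩
    exact ⟨by rw [Smirnov.length_eq_sum_letterCounts, hw, hν], hchain, hcounts.1 hw⟩
end

section
/- The function f(x, y) = Σ_{n=0}^∞ ( x^n y^n/(n!)^2 + x^n y^{n+1}/(n!(n+1)!) + x^{n+1} y^n/((n+1)! n!) ), defined for all real x, y, satisfies the partial differential equation ∂²f/∂x∂y = f. -/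
/-!
Write `x^[i] = x ^ i / i!`. The series is the sum of `x^[i] * y^[j]` over the band `|i - j| ≤ 1`
of `ℕ × ℕ`. Since `∂ y^[j + 1] = y^[j]` and `∂ y^[0] = 0`, applying `∂²/∂x∂y` termwise shifts the
band by `(1, 1)` and kills the terms with `i = 0` or `j = 0`, so the band is mapped onto itself.
Termwise differentiation is justified on balls of radius `R`, where each term is dominated by its
value at `(R, R)`, and these values form a subfamily of the absolutely summable double series of
`exp R * exp R`.
-/

noncomputable def contBinom (x y : ℝ) : ℝ :=
  ∑' n : ℕ, (x ^ n * y ^ n / (n.factorial * n.factorial)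
    + x ^ n * y ^ (n + 1) / (n.factorial * (n + 1).factorial)
    + x ^ (n + 1) * y ^ n / ((n + 1).factorial * n.factorial))

open Nat Function

theorem hasDerivAt_tsum_of_abs_le {ι : Type*} {g g' : ι → ℝ → ℝ} (u : ℝ → ι → ℝ)
    (hu : ∀ r, Summable (u r)) (hg : ∀ i t, HasDerivAt (g i) (g' i t) t)
    (hg' : ∀ r i t, |t| ≤ r → |g' i t| ≤ u r i) (hg0 : Summable fun i => g i 0) (t : ℝ) :
    HasDerivAt (fun s => ∑' i, g i s) (∑' i, g' i t) t := by
  have hball : ∀ s ∈ Metric.ball (0 : ℝ) (|t| + 1), |s| ≤ |t| + 1 := fun s hs =>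
    (mem_ball_zero_iff.1 hs).le
  exact hasDerivAt_tsum_of_isPreconnected (hu (|t| + 1)) Metric.isOpen_ball
    (convex_ball _ _).isPreconnected (fun i s _ => hg i s)
    (fun i s hs => hg' _ i s (hball s hs)) (Metric.mem_ball_self (by positivity)) hg0
    (mem_ball_zero_iff.2 (by rw [Real.norm_eq_abs]; linarith))

namespace ContBinom

noncomputable def dpow (n : ℕ) (x : ℝ) : ℝ := x ^ n / n !

theorem hasDerivAt_dpow_succ (n : ℕ) (x : ℝ) : HasDerivAt (dpow (n + 1)) (dpow n x) x := by
  have h := (hasDerivAt_pow (n + 1) x).div_const ((n + 1)! : ℝ)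
  rwa [Nat.add_sub_cancel, show ((n + 1 : ℕ) : ℝ) * x ^ n / (n + 1)! = dpow n x by
    rw [dpow, factorial_succ]; push_cast; field_simp] at h

theorem abs_dpow_le {x R : ℝ} (h : |x| ≤ R) (n : ℕ) : |dpow n x| ≤ dpow n R := by
  unfold dpow
  rw [abs_div, abs_pow, Nat.abs_cast]
  gcongr

theorem abs_dpow_mul_dpow_le {x y R S : ℝ} (hx : |x| ≤ R) (hy : |y| ≤ S) (i j : ℕ) :
    |dpow i x * dpow j y| ≤ dpow i R * dpow j S := by
  rw [abs_mul]
  exact mul_le_mul (abs_dpow_le hx i) (abs_dpow_le hy j) (abs_nonneg _)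
    ((abs_nonneg _).trans (abs_dpow_le hx i))

theorem summable_norm_dpow (x : ℝ) : Summable fun n => ‖dpow n x‖ := by
  simpa [dpow, abs_div, abs_pow] using Real.summable_pow_div_factorial |x|

theorem summable_dpow_mul_dpow (x y : ℝ) :
    Summable fun p : ℕ × ℕ => dpow p.1 x * dpow p.2 y :=
  summable_mul_of_summable_norm (summable_norm_dpow x) (summable_norm_dpow y)

theorem summable_dpow_mul_dpow_comp {p : ℕ → ℕ × ℕ} (hp : Injective p) (x y : ℝ) :
    Summable fun n => dpow (p n).1 x * dpow (p n).2 y :=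
  (summable_dpow_mul_dpow x y).comp_injective hp

noncomputable def bandTerm (n : ℕ) (x y : ℝ) : ℝ :=
  dpow n x * dpow n y + dpow n x * dpow (n + 1) y + dpow (n + 1) x * dpow n y

noncomputable def bandTermDerivRight (n : ℕ) (x y : ℝ) : ℝ :=
  dpow (n + 1) x * dpow n y + dpow (n + 1) x * dpow (n + 1) y + dpow (n + 2) x * dpow n y

theorem contBinom_eq_tsum_bandTerm (x y : ℝ) : contBinom x y = ∑' n, bandTerm n x y := by
  refine tsum_congr fun n => ?_
  simp only [bandTerm, dpow, mul_div_mul_comm]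

theorem summable_bandTerm (x y : ℝ) : Summable fun n => bandTerm n x y :=
  ((summable_dpow_mul_dpow_comp (p := fun n => (n, n)) (by intro a b h; simpa using h) x y).add
    (summable_dpow_mul_dpow_comp (p := fun n => (n, n + 1)) (by intro a b h; simpa using h)
      x y)).add
    (summable_dpow_mul_dpow_comp (p := fun n => (n + 1, n)) (by intro a b h; simpa using h) x y)

theorem summable_bandTermDerivRight (x y : ℝ) : Summable fun n => bandTermDerivRight n x y :=
  ((summable_dpow_mul_dpow_comp (p := fun n => (n + 1, n)) (by intro a b h; simpa using h) x y).add
    (summable_dpow_mul_dpow_comp (p := fun n => (n + 1, n + 1)) (by intro a b h; simpa using h)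
      x y)).add
    (summable_dpow_mul_dpow_comp (p := fun n => (n + 2, n)) (by intro a b h; simpa using h) x y)

theorem abs_bandTerm_le {x y R S : ℝ} (hx : |x| ≤ R) (hy : |y| ≤ S) (n : ℕ) :
    |bandTerm n x y| ≤ bandTerm n R S :=
  (abs_add_three _ _ _).trans <| add_le_add_three (abs_dpow_mul_dpow_le hx hy _ _)
    (abs_dpow_mul_dpow_le hx hy _ _) (abs_dpow_mul_dpow_le hx hy _ _)

theorem abs_bandTermDerivRight_le {x y R S : ℝ} (hx : |x| ≤ R) (hy : |y| ≤ S) (n : ℕ) :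
    |bandTermDerivRight n x y| ≤ bandTermDerivRight n R S :=
  (abs_add_three _ _ _).trans <| add_le_add_three (abs_dpow_mul_dpow_le hx hy _ _)
    (abs_dpow_mul_dpow_le hx hy _ _) (abs_dpow_mul_dpow_le hx hy _ _)

theorem hasDerivAt_bandTerm_zero_right (x y : ℝ) : HasDerivAt (bandTerm 0 x) 1 y := by
  have h : bandTerm 0 x = fun y => 1 + y + x := by
    funext y
    simp [bandTerm, dpow]
  rw [h]
  simpa using ((hasDerivAt_id y).const_add 1).add_const x

theorem hasDerivAt_bandTerm_succ_right (n : ℕ) (x y : ℝ) :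
    HasDerivAt (bandTerm (n + 1) x) (bandTermDerivRight n x y) y :=
  (((hasDerivAt_dpow_succ n y).const_mul _).add
    ((hasDerivAt_dpow_succ (n + 1) y).const_mul _)).add ((hasDerivAt_dpow_succ n y).const_mul _)

theorem hasDerivAt_bandTermDerivRight_left (n : ℕ) (x y : ℝ) :
    HasDerivAt (fun x => bandTermDerivRight n x y) (bandTerm n x y) x :=
  (((hasDerivAt_dpow_succ n x).mul_const _).add
    ((hasDerivAt_dpow_succ n x).mul_const _)).add ((hasDerivAt_dpow_succ (n + 1) x).mul_const _)

-- The `1` is the `y`-derivative of `bandTerm 0 x y = 1 + y + x`.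
noncomputable def contBinomDerivRight (x y : ℝ) : ℝ := 1 + ∑' n, bandTermDerivRight n x y

theorem hasDerivAt_contBinom_right (x y : ℝ) :
    HasDerivAt (contBinom x) (contBinomDerivRight x y) y := by
  have h : contBinom x = fun y => bandTerm 0 x y + ∑' n, bandTerm (n + 1) x y := by
    funext y
    rw [contBinom_eq_tsum_bandTerm, (summable_bandTerm x y).tsum_eq_zero_add]
  rw [h]
  exact (hasDerivAt_bandTerm_zero_right x y).add <|
    hasDerivAt_tsum_of_abs_le (fun r n => bandTermDerivRight n |x| r)
      (summable_bandTermDerivRight |x|) (fun n => hasDerivAt_bandTerm_succ_right n x)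
      (fun _ n _ ht => abs_bandTermDerivRight_le le_rfl ht n)
      ((summable_nat_add_iff 1).2 (summable_bandTerm x 0)) y

theorem hasDerivAt_contBinomDerivRight_left (x y : ℝ) :
    HasDerivAt (fun x => contBinomDerivRight x y) (contBinom x y) x := by
  rw [contBinom_eq_tsum_bandTerm]
  exact (hasDerivAt_tsum_of_abs_le (fun r n => bandTerm n r |y|)
    (fun r => summable_bandTerm r |y|) (fun n x => hasDerivAt_bandTermDerivRight_left n x y)
    (fun _ n _ ht => abs_bandTerm_le ht le_rfl n) (summable_bandTermDerivRight 0 y) x).const_add 1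

end ContBinom

open ContBinom in
theorem contBinom_pde (x y : ℝ) :
    deriv (fun x' => deriv (fun y' => contBinom x' y') y) x = contBinom x y := by
  have hy : (fun x' => deriv (fun y' => contBinom x' y') y)
      = fun x' => contBinomDerivRight x' y :=
    funext fun x' => (hasDerivAt_contBinom_right x' y).deriv
  rw [hy, (hasDerivAt_contBinomDerivRight_left x y).deriv]
end
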